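/- For every nonnegative integer n, the sum over k from 0 to 2n of (-1)^k times the q-binomial coefficient (2n choose k)_q equals the q-Pochhammer symbol (q; q^2)_n = prod_{j=0}^{n-1}(1 - q^{2j+1}) (Gauss's identity). -/

import Mathlib

/-!
Let `H m y = ∑ₖ [m, k] yᵏ` be the Rogers–Szegő polynomial. The two Pascal rules for Gaussian
binomials give `H (m + 1) y = H m (q * y) + y * H m y` and
`H (m + 1) (-q) = H m (-q) - q ^ (m + 1) * H m (-1)`. Eliminating `H · (-q)` yields
`H (m + 2) (-1) = (1 - q ^ (m + 1)) * H m (-1)`, and Gauss's identity follows from `H 0 (-1) = 1`.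
-/

open Finset

/-- Gaussian (q-)binomial coefficient, defined over any commutative ring by the
Pascal-type recurrence `[n+1, k+1] = [n, k] + q^(k+1) * [n, k+1]`. -/
def qbinom {R : Type*} [CommRing R] (q : R) : ℕ → ℕ → R
  | _, 0 => 1
  | 0, _ + 1 => 0
  | n + 1, k + 1 => qbinom q n k + q ^ (k + 1) * qbinom q n (k + 1)

section

variable {R : Type*} [CommRing R] (q : R)

theorem qbinom_zero_right (n : ℕ) : qbinom q n 0 = 1 := by
  cases n <;> rfl

theorem qbinom_succ_succ (n k : ℕ) :
    qbinom q (n + 1) (k + 1) = qbinom q n k + q ^ (k + 1) * qbinom q n (k + 1) :=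
  rfl

theorem qbinom_eq_zero_of_lt : ∀ {n k : ℕ}, n < k → qbinom q n k = 0
  | 0, _ + 1, _ => rfl
  | n + 1, k + 1, h => by
    rw [qbinom_succ_succ, qbinom_eq_zero_of_lt (by omega : n < k),
      qbinom_eq_zero_of_lt (by omega : n < k + 1)]
    ring

theorem qbinom_self : ∀ n : ℕ, qbinom q n n = 1
  | 0 => rfl
  | n + 1 => by
    rw [qbinom_succ_succ, qbinom_self n, qbinom_eq_zero_of_lt q n.lt_succ_self]
    ring

/-- The second Pascal rule `[n+1, k+1] = q^(n-k) [n, k] + [n, k+1]`, written with `n = a + k` to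
avoid truncated subtraction. -/
theorem qbinom_succ_succ' (a k : ℕ) :
    qbinom q (a + k + 1) (k + 1) = q ^ a * qbinom q (a + k) k + qbinom q (a + k) (k + 1) := by
  induction a generalizing k with
  | zero =>
    rw [zero_add, qbinom_self, qbinom_self, qbinom_eq_zero_of_lt q k.lt_succ_self]
    ring
  | succ a iha =>
    induction k with
    | zero =>
      have h := iha 0
      simp only [add_zero, zero_add, qbinom_zero_right] at h ⊢
      have h₁ : qbinom q (a + 1 + 1) 1 = 1 + q * qbinom q (a + 1) 1 := by
        rw [qbinom_succ_succ, qbinom_zero_right, zero_add, pow_one]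
      have h₂ : qbinom q (a + 1) 1 = 1 + q * qbinom q a 1 := by
        rw [qbinom_succ_succ, qbinom_zero_right, zero_add, pow_one]
      linear_combination h₁ + q * h - h₂
    | succ k ihk =>
      have h := iha (k + 1)
      rw [show a + 1 + k = a + k + 1 by omega] at ihk
      rw [show a + (k + 1) = a + k + 1 by omega] at h
      rw [show a + 1 + (k + 1) = a + k + 1 + 1 by omega, qbinom_succ_succ q (a + k + 1 + 1)]
      linear_combination ihk + q ^ (k + 2) * h - q ^ (a + 1) * qbinom_succ_succ q (a + k + 1) k -
        qbinom_succ_succ q (a + k + 1) (k + 1)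

def rogersSzego (n : ℕ) (y : R) : R :=
  ∑ k ∈ range (n + 1), y ^ k * qbinom q n k

theorem rogersSzego_zero (y : R) : rogersSzego q 0 y = 1 := by
  simp [rogersSzego, qbinom_zero_right]

theorem rogersSzego_eq_one_add_sum {n N : ℕ} (h : n ≤ N) (y : R) :
    rogersSzego q n y = 1 + ∑ k ∈ range N, y ^ (k + 1) * qbinom q n (k + 1) := by
  rw [rogersSzego, sum_subset (range_subset_range.2 (Nat.succ_le_succ h)), sum_range_succ']
  · simp [qbinom_zero_right, add_comm]
  · intro k _ hk
    rw [mem_range, not_lt] at hk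
    rw [qbinom_eq_zero_of_lt q (by omega), mul_zero]

theorem rogersSzego_succ (n : ℕ) (y : R) :
    rogersSzego q (n + 1) y = rogersSzego q n (q * y) + y * rogersSzego q n y := by
  have h : ∀ k ∈ range (n + 1), y ^ (k + 1) * qbinom q (n + 1) (k + 1) =
      y * (y ^ k * qbinom q n k) + (q * y) ^ (k + 1) * qbinom q n (k + 1) := by
    intro k _
    rw [qbinom_succ_succ]
    ring
  rw [rogersSzego_eq_one_add_sum q le_rfl, sum_congr rfl h, sum_add_distrib, ← mul_sum,
    rogersSzego_eq_one_add_sum q n.le_succ (q * y), rogersSzego]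
  ring

theorem rogersSzego_succ_neg (n : ℕ) :
    rogersSzego q (n + 1) (-q) = rogersSzego q n (-q) - q ^ (n + 1) * rogersSzego q n (-1) := by
  have h : ∀ k ∈ range (n + 1), (-q) ^ (k + 1) * qbinom q (n + 1) (k + 1) =
      -(q ^ (n + 1) * ((-1) ^ k * qbinom q n k)) + (-q) ^ (k + 1) * qbinom q n (k + 1) := by
    intro k hk
    obtain ⟨a, rfl⟩ := Nat.exists_eq_add_of_le' (Nat.lt_succ_iff.mp (mem_range.mp hk))
    rw [qbinom_succ_succ']
    ring
  rw [rogersSzego_eq_one_add_sum q le_rfl, sum_congr rfl h, sum_add_distrib, sum_neg_distrib,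
    ← mul_sum, rogersSzego_eq_one_add_sum q n.le_succ (-q), rogersSzego]
  ring

theorem rogersSzego_add_two_neg_one (n : ℕ) :
    rogersSzego q (n + 2) (-1) = (1 - q ^ (n + 1)) * rogersSzego q n (-1) := by
  rw [rogersSzego_succ q (n + 1), mul_neg_one, neg_one_mul, rogersSzego_succ_neg,
    rogersSzego_succ q n (-1), mul_neg_one]
  ring

end

theorem stmt1 {R : Type*} [CommRing R] (q : R) (n : ℕ) :
    ∑ k ∈ Finset.range (2 * n + 1), (-1 : R) ^ k * qbinom q (2 * n) k =
      ∏ j ∈ Finset.range n, (1 - q ^ (2 * j + 1)) := by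
  change rogersSzego q (2 * n) (-1) = _
  induction n with
  | zero => simp [rogersSzego_zero]
  | succ n ih =>
    rw [Nat.mul_succ, rogersSzego_add_two_neg_one, ih, prod_range_succ, mul_comm]
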